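/- arXiv:1411.4067 — 2 statements merged into one kernel-verified Lean document; each statement's English description precedes it below -/
import Mathlib

section
/- Let p be a prime, F = F_p, and n ≥ 2, and let f : F^n → F be defined by a canonical datum with partition A_1,…,A_r, segments S_1,…,S_n, and constants B_1,…,B_{r+1}. Then the canalizing variables of f are exactly the variables x_j with j ∈ A_1; more precisely, for j ∈ A_1 the function f is ⟨j:a:b⟩ canalizing exactly for a ∈ S_j and b = B_1, while for j ∉ A_1 there exist no a, b ∈ F such that f is ⟨j:a:b⟩ canalizing. -/
/-- A proper nonempty subset `S` of `F_p` is a segment if `S = {0,…,j}` or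
`F∖S = {0,…,j}` for some `0 ≤ j < p-1`. -/
def IsSegment (p : ℕ) (S : Finset (ZMod p)) : Prop :=
  ∃ j : ℕ, j < p - 1 ∧
    ((∀ x : ZMod p, x ∈ S ↔ x.val ≤ j) ∨ (∀ x : ZMod p, x ∈ S ↔ ¬ x.val ≤ j))

/-- The indicator function `Q_S` of the complement of `S`: `0` on `S`, `1` off `S`. -/
def Qind (p : ℕ) (S : Finset (ZMod p)) (x : ZMod p) : ZMod p :=
  if x ∈ S then 0 else 1

/-- `f` is nested canalizing in the variable order `x_{σ(1)},…,x_{σ(n)}` with canalizing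
input sets `S₁,…,Sₙ` (segments) and canalized outputs `b₁,…,bₙ` together with the final
output `bout = b_{n+1}`:  `f x = b i` where `i` is the least index with `x (σ i) ∈ S i`,
and `f x = bout` if no such index exists. -/
def NestedWith (p n : ℕ) (f : (Fin n → ZMod p) → ZMod p) (σ : Equiv.Perm (Fin n))
    (S : Fin n → Finset (ZMod p)) (b : Fin n → ZMod p) (bout : ZMod p) : Prop :=
  (∀ i, IsSegment p (S i)) ∧
  (∀ x : Fin n → ZMod p, ∀ i : Fin n,
      x (σ i) ∈ S i → (∀ j : Fin n, j < i → x (σ j) ∉ S j) → f x = b i) ∧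
  (∀ x : Fin n → ZMod p, (∀ i : Fin n, x (σ i) ∉ S i) → f x = bout)

/-- `f` is a nested canalizing function (NCF) if it is nested canalizing for some
variable order, canalizing input sets and canalized outputs, with `b n ≠ b (n+1)`. -/
def IsNCF (p n : ℕ) (f : (Fin n → ZMod p) → ZMod p) : Prop :=
  ∃ (σ : Equiv.Perm (Fin n)) (S : Fin n → Finset (ZMod p)) (b : Fin n → ZMod p)
    (bout : ZMod p), (∀ h : n - 1 < n, b ⟨n - 1, h⟩ ≠ bout) ∧ NestedWith p n f σ S b bout

/-- `f` is `⟨i:a:b⟩` canalizing. -/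
def IsCanalizing (p n : ℕ) (f : (Fin n → ZMod p) → ZMod p) (i : Fin n) (a b : ZMod p) :
    Prop :=
  (∀ x, x i = a → f x = b) ∧ ¬ (∀ x, x i ≠ a → f x = b)

/-- A canonical datum in `n` variables: a layer number `r`, a partition `A₁,…,A_r` of the
variables into nonempty sets, segments `S₁,…,Sₙ`, and constants `B₁ ∈ F`,
`B₂,…,B_{r+1} ∈ F∖{0}` (here `B i` is `B_{i+1}`), with `B_r + B_{r+1} ≠ 0` if `|A_r| = 1`. -/
structure CanonicalDatum (p n : ℕ) where
  r : ℕ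
  r_pos : 1 ≤ r
  r_le : r ≤ n
  A : Fin r → Finset (Fin n)
  A_nonempty : ∀ i, (A i).Nonempty
  A_disjoint : ∀ i j, i ≠ j → Disjoint (A i) (A j)
  A_cover : ∀ v : Fin n, ∃ i, v ∈ A i
  S : Fin n → Finset (ZMod p)
  S_seg : ∀ j, IsSegment p (S j)
  B : Fin (r + 1) → ZMod p
  B_ne : ∀ i : Fin (r + 1), 0 < (i : ℕ) → B i ≠ 0
  last_cond : (A ⟨r - 1, Nat.sub_lt r_pos one_pos⟩).card = 1 →
      B ⟨r - 1, Nat.lt_succ_of_lt (Nat.sub_lt r_pos one_pos)⟩ + B ⟨r, Nat.lt_succ_self r⟩ ≠ 0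

/-- Evaluation of the nested expression `M i * ( … ) + B i` with `fuel` layers left. -/
def nestEvalAux (p : ℕ) (M B : ℕ → ZMod p) : ℕ → ℕ → ZMod p
  | 0, i => B i
  | k + 1, i => M i * nestEvalAux p M B k (i + 1) + B i

/-- The product of indicator functions of layer `i` (0-indexed), `M_{i+1}(x)`. -/
def CanonicalDatum.layer {p n : ℕ} (d : CanonicalDatum p n) (i : ℕ)
    (x : Fin n → ZMod p) : ZMod p :=
  if h : i < d.r then ∏ j ∈ d.A ⟨i, h⟩, Qind p (d.S j) (x j) else 1

/-- The constants of the datum as a function on `ℕ`. -/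
def CanonicalDatum.Bn {p n : ℕ} (d : CanonicalDatum p n) (i : ℕ) : ZMod p :=
  if h : i < d.r + 1 then d.B ⟨i, h⟩ else 0

/-- The function `f(x) = M₁(M₂(⋯(M_{r−1}(B_{r+1}M_r + B_r) + B_{r−1})⋯) + B₂) + B₁`
defined by a canonical datum. -/
def CanonicalDatum.eval {p n : ℕ} (d : CanonicalDatum p n) (x : Fin n → ZMod p) : ZMod p :=
  nestEvalAux p (fun i => d.layer i x) d.Bn d.r 0

/-- Stirling numbers of the second kind `S(n,k)`, characterized by
`k! · S(n,k) = ∑_{t=0}^{k} (−1)^t C(k,t) (k−t)^n`. -/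
def stirling2 (n k : ℕ) : ℚ :=
  (∑ t ∈ Finset.range (k + 1), (-1 : ℚ) ^ t * (k.choose t) * ((k - t : ℕ) : ℚ) ^ n) /
    k.factorial

/-- The number of nested canalizing functions `f : F_p^n → F_p`. -/
noncomputable def NCFcount (p n : ℕ) : ℕ :=
  Set.ncard {f : (Fin n → ZMod p) → ZMod p | IsNCF p n f}



/-!
On the slice `x_j = a`, every layer not containing `x_j` can be switched to `0` or to `1`
independently, by putting its variables inside or outside their segments. Switching on the first
`k` layers and off the next one evaluates the nested expression to `B₁ + ⋯ + B_{k+1}`, and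
consecutive such sums differ by a nonzero constant. So `f` is constant on the slice only when the
first layer is forced to `0` there, i.e. `j ∈ A₁` and `a ∈ S_j`. The exceptional configurations
where a singleton layer `{x_j}` is forced to `1` are handled by switching on one more layer; for
`A₂ = {x_j}` with `B₂ + B₃ = 0` this needs a fourth layer, whose existence is exactly what the
condition `B_r + B_{r+1} ≠ 0` for `|A_r| = 1` guarantees.
-/

open Finset

namespace IsSegment

variable {p : ℕ} {S : Finset (ZMod p)}

theorem nonempty (h : IsSegment p S) : S.Nonempty := by
  obtain ⟨j, hj, hS | hS⟩ := h
  · exact ⟨0, (hS 0).mpr (by simp)⟩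
  · refine ⟨((p - 1 : ℕ) : ZMod p), (hS _).mpr ?_⟩
    rw [ZMod.val_natCast, Nat.mod_eq_of_lt (by omega)]
    omega

theorem exists_notMem (h : IsSegment p S) : ∃ x, x ∉ S := by
  obtain ⟨j, hj, hS | hS⟩ := h
  · refine ⟨((p - 1 : ℕ) : ZMod p), fun hx => ?_⟩
    have := (hS _).mp hx
    rw [ZMod.val_natCast, Nat.mod_eq_of_lt (by omega)] at this
    omega
  · exact ⟨0, fun hx => (hS 0).mp hx (by simp)⟩

end IsSegment

theorem not_isCanalizing_of_ne {p n : ℕ} {f : (Fin n → ZMod p) → ZMod p} {i : Fin n}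
    {a b : ZMod p} {x y : Fin n → ZMod p} (hx : x i = a) (hy : y i = a) (hne : f x ≠ f y) :
    ¬ IsCanalizing p n f i a b :=
  fun h => hne ((h.1 x hx).trans (h.1 y hy).symm)

theorem nestEvalAux_eq_sum {p : ℕ} {M B : ℕ → ZMod p} {m k s : ℕ} (hkm : k ≤ m)
    (hone : ∀ i < k, M (s + i) = 1) (hzero : k < m → M (s + k) = 0) :
    nestEvalAux p M B m s = ∑ i ∈ range (k + 1), B (s + i) := by
  induction k generalizing m s with
  | zero =>
    cases m with
    | zero => simp [nestEvalAux]
    | succ m => rw [nestEvalAux, show M s = 0 from hzero (by omega)]; simp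
  | succ k ih =>
    obtain ⟨m, rfl⟩ : ∃ m', m = m' + 1 := ⟨m - 1, by omega⟩
    have hs : M s = 1 := by simpa using hone 0 (by omega)
    have h := ih (m := m) (s := s + 1) (by omega)
      (fun i hi => by simpa [Nat.add_right_comm, Nat.add_assoc] using hone (i + 1) (by omega))
      (fun hk => by simpa [Nat.add_right_comm, Nat.add_assoc] using hzero (by omega))
    rw [nestEvalAux, hs, one_mul, h, sum_range_succ' _ (k + 1)]
    simp [Nat.add_right_comm, Nat.add_assoc]

namespace CanonicalDatum

variable {p n : ℕ} (d : CanonicalDatum p n)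

theorem eq_of_mem_A {v : Fin n} {i i' : Fin d.r} (h : v ∈ d.A i) (h' : v ∈ d.A i') :
    i = i' := by
  by_contra hne
  exact disjoint_left.mp (d.A_disjoint i i' hne) h h'

theorem two_le_r_of_forall_eq (hn : 2 ≤ n) {i : Fin d.r} {j : Fin n}
    (h : ∀ v ∈ d.A i, v = j) : 2 ≤ d.r := by
  have : Nontrivial (Fin n) := Fin.nontrivial_iff_two_le.mpr hn
  obtain ⟨v, hvj⟩ := exists_ne j
  obtain ⟨i', hv⟩ := d.A_cover v
  have hne : i' ≠ i := fun hi => hvj (h v (hi ▸ hv))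
  exact Fin.nontrivial_iff_two_le.mp ⟨⟨i', i, hne⟩⟩

theorem layer_eq_zero {x : Fin n → ZMod p} {i : ℕ} (hi : i < d.r) {v : Fin n}
    (hv : v ∈ d.A ⟨i, hi⟩) (hx : x v ∈ d.S v) : d.layer i x = 0 := by
  rw [layer, dif_pos hi]
  exact prod_eq_zero hv (by simp [Qind, hx])

theorem layer_eq_one {x : Fin n → ZMod p} {i : ℕ}
    (h : ∀ hi : i < d.r, ∀ v ∈ d.A ⟨i, hi⟩, x v ∉ d.S v) : d.layer i x = 1 := by
  unfold layer
  split
  · exact prod_eq_one fun v hv => by simp [Qind, h _ v hv]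
  · rfl

theorem Bn_zero : d.Bn 0 = d.B 0 :=
  dif_pos (Nat.succ_pos _)

theorem Bn_ne_zero {i : ℕ} (h0 : 0 < i) (hi : i ≤ d.r) : d.Bn i ≠ 0 := by
  rw [Bn, dif_pos (Nat.lt_succ_of_le hi)]
  exact d.B_ne _ h0

theorem eval_eq_sum {x : Fin n → ZMod p} {k : ℕ} (hk : k ≤ d.r)
    (hone : ∀ i < k, d.layer i x = 1) (hzero : k < d.r → d.layer k x = 0) :
    d.eval x = ∑ i ∈ range (k + 1), d.Bn i := by
  rw [eval]
  simpa using nestEvalAux_eq_sum (M := fun i => d.layer i x) (B := d.Bn) (s := 0) hk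
    (fun i hi => by simpa using hone i hi) fun h => by simpa using hzero h

theorem eval_eq_Bn_zero {x : Fin n → ZMod p} {j : Fin n} (hj : j ∈ d.A ⟨0, d.r_pos⟩)
    (hx : x j ∈ d.S j) : d.eval x = d.B 0 := by
  rw [d.eval_eq_sum (Nat.zero_le _) (by simp) fun _ => d.layer_eq_zero d.r_pos hj hx,
    sum_range_one, Bn_zero]

/-- The point of the slice `x_j = a` at which the layers `0, …, k-1` are switched on (all their
variables other than `x_j` lie outside their segments) and all later layers are switched off. -/
noncomputable def probe (j : Fin n) (a : ZMod p) (k : ℕ) (v : Fin n) : ZMod p :=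
  open Classical in
  if v = j then a
  else if ∃ i : Fin d.r, (i : ℕ) < k ∧ v ∈ d.A i then (d.S_seg v).exists_notMem.choose
  else (d.S_seg v).nonempty.choose

variable {d}

theorem probe_self {j : Fin n} {a : ZMod p} {k : ℕ} : d.probe j a k j = a := if_pos rfl

theorem probe_notMem {j v : Fin n} {a : ZMod p} {k : ℕ} {i : Fin d.r} (hvj : v ≠ j)
    (hv : v ∈ d.A i) (hik : (i : ℕ) < k) : d.probe j a k v ∉ d.S v := by
  rw [probe, if_neg hvj, if_pos ⟨i, hik, hv⟩]
  exact (d.S_seg v).exists_notMem.choose_spec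

theorem probe_mem {j v : Fin n} {a : ZMod p} {k : ℕ} {i : Fin d.r} (hvj : v ≠ j)
    (hv : v ∈ d.A i) (hki : k ≤ i) : d.probe j a k v ∈ d.S v := by
  have hnot : ¬ ∃ i' : Fin d.r, (i' : ℕ) < k ∧ v ∈ d.A i' := fun ⟨i', hi', hv'⟩ => by
    have := d.eq_of_mem_A hv hv'
    subst this
    omega
  rw [probe, if_neg hvj, if_neg hnot]
  exact (d.S_seg v).nonempty.choose_spec

theorem eval_probe {j : Fin n} {a : ZMod p} {ℓ : ℕ} (hℓ : ℓ < d.r) (hj : j ∈ d.A ⟨ℓ, hℓ⟩)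
    {k : ℕ} (hk : k ≤ d.r) (hlt : ℓ < k → a ∉ d.S j)
    (hge : k = ℓ → a ∈ d.S j ∨ ∃ v ∈ d.A ⟨ℓ, hℓ⟩, v ≠ j) :
    d.eval (d.probe j a k) = ∑ i ∈ range (k + 1), d.Bn i := by
  refine d.eval_eq_sum hk (fun i hik => d.layer_eq_one fun hi v hv => ?_) fun hkr => ?_
  · by_cases hvj : v = j
    · subst hvj
      have hiℓ : i = ℓ := Fin.mk.inj (d.eq_of_mem_A hv hj)
      rw [probe_self]
      exact hlt (hiℓ ▸ hik)
    · exact probe_notMem hvj hv hik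
  · by_cases hA : ∃ v ∈ d.A ⟨k, hkr⟩, v ≠ j
    · obtain ⟨v, hv, hvj⟩ := hA
      exact d.layer_eq_zero hkr hv (probe_mem hvj hv le_rfl)
    · push Not at hA
      obtain ⟨v, hv⟩ := d.A_nonempty ⟨k, hkr⟩
      have hjk : j ∈ d.A ⟨k, hkr⟩ := hA v hv ▸ hv
      have hkℓ : k = ℓ := Fin.mk.inj (d.eq_of_mem_A hjk hj)
      subst hkℓ
      rcases hge rfl with ha | ⟨w, hw, hwj⟩
      · exact d.layer_eq_zero hkr hjk (by rwa [probe_self])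
      · exact absurd (hA w hw) hwj

variable (d)

theorem exists_eval_probe_ne_of_mem_first (hn : 2 ≤ n) {j : Fin n} {a : ZMod p}
    (hj : j ∈ d.A ⟨0, d.r_pos⟩) (ha : a ∉ d.S j) :
    ∃ k k', d.eval (d.probe j a k) ≠ d.eval (d.probe j a k') := by
  by_cases hA : ∃ v ∈ d.A ⟨0, d.r_pos⟩, v ≠ j
  · refine ⟨1, 0, ?_⟩
    rw [d.eval_probe d.r_pos hj d.r_pos (fun _ => ha) (by omega),
      d.eval_probe d.r_pos hj (Nat.zero_le _) (by omega) fun _ => Or.inr hA]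
    simpa [sum_range_succ] using d.Bn_ne_zero one_pos d.r_pos
  · push Not at hA
    have hr := d.two_le_r_of_forall_eq hn hA
    refine ⟨2, 1, ?_⟩
    rw [d.eval_probe d.r_pos hj hr (fun _ => ha) (by omega),
      d.eval_probe d.r_pos hj d.r_pos (fun _ => ha) (by omega)]
    simpa [sum_range_succ] using d.Bn_ne_zero two_pos hr

theorem three_le_r_of_second_singleton (hr : 2 ≤ d.r) {j : Fin n}
    (hj : j ∈ d.A ⟨1, hr⟩) (hA : ∀ v ∈ d.A ⟨1, hr⟩, v = j) (hB : d.Bn 1 + d.Bn 2 = 0) :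
    3 ≤ d.r := by
  by_contra h3
  obtain ⟨r', hr'⟩ : ∃ r', d.r = r' + 2 := ⟨d.r - 2, by omega⟩
  have hcard : (d.A ⟨1, hr⟩).card = 1 := card_eq_one.mpr ⟨j, eq_singleton_iff_unique_mem.mpr ⟨hj, hA⟩⟩
  have hlast := d.last_cond (by convert hcard using 4; omega)
  apply hlast
  convert hB using 1
  simp only [Bn, dif_pos (show 1 < d.r + 1 by omega), dif_pos (show 2 < d.r + 1 by omega)]
  congr 2 <;> ext <;> simp <;> omega

theorem exists_eval_probe_ne_of_mem_later {j : Fin n} {a : ZMod p} {ℓ : ℕ} (hℓ : ℓ < d.r)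
    (hj : j ∈ d.A ⟨ℓ, hℓ⟩) (hℓ0 : 0 < ℓ) :
    ∃ k k', d.eval (d.probe j a k) ≠ d.eval (d.probe j a k') := by
  have probe0 : d.eval (d.probe j a 0) = d.Bn 0 := by
    simpa using d.eval_probe hℓ hj (Nat.zero_le _) (by omega) (by omega)
  by_cases hfree : ℓ = 1 → a ∈ d.S j ∨ ∃ v ∈ d.A ⟨ℓ, hℓ⟩, v ≠ j
  · refine ⟨1, 0, ?_⟩
    rw [d.eval_probe hℓ hj d.r_pos (by omega) fun h => hfree h.symm, probe0]
    simpa [sum_range_succ] using d.Bn_ne_zero one_pos d.r_pos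
  -- `A₂ = {x_j}` and `a ∉ S_j`: the second layer is `1` on the whole slice.
  push Not at hfree
  obtain ⟨rfl, ha, hA⟩ := hfree
  by_cases hB : d.Bn 1 + d.Bn 2 = 0
  · have hr := d.three_le_r_of_second_singleton hℓ hj hA hB
    refine ⟨3, 0, ?_⟩
    rw [d.eval_probe hℓ hj hr (fun _ => ha) (by omega), probe0]
    simp only [sum_range_succ]
    intro h
    exact d.Bn_ne_zero three_pos hr (by linear_combination h - hB)
  · refine ⟨2, 0, ?_⟩
    rw [d.eval_probe hℓ hj hℓ (fun _ => ha) (by omega), probe0]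
    simp only [sum_range_succ]
    intro h
    exact hB (by linear_combination h)

theorem exists_eval_ne_on_slice (hn : 2 ≤ n) {j : Fin n} {a : ZMod p}
    (h0 : j ∈ d.A ⟨0, d.r_pos⟩ → a ∉ d.S j) :
    ∃ x y : Fin n → ZMod p, x j = a ∧ y j = a ∧ d.eval x ≠ d.eval y := by
  obtain ⟨⟨ℓ, hℓ⟩, hj⟩ := d.A_cover j
  obtain ⟨k, k', hne⟩ : ∃ k k', d.eval (d.probe j a k) ≠ d.eval (d.probe j a k') := by
    rcases Nat.eq_zero_or_pos ℓ with rfl | hℓ0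
    · exact d.exists_eval_probe_ne_of_mem_first hn hj (h0 hj)
    · exact d.exists_eval_probe_ne_of_mem_later hℓ hj hℓ0
  exact ⟨_, _, probe_self, probe_self, hne⟩

theorem exists_eval_ne_B_zero {j : Fin n} (hj : j ∈ d.A ⟨0, d.r_pos⟩) :
    ∃ x : Fin n → ZMod p, x j ∉ d.S j ∧ d.eval x ≠ d.B 0 := by
  obtain ⟨c, hc⟩ := (d.S_seg j).exists_notMem
  refine ⟨d.probe j c 1, by rwa [probe_self], ?_⟩
  rw [d.eval_probe d.r_pos hj d.r_pos (fun _ => hc) (by omega), ← Bn_zero]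
  simpa [sum_range_succ] using d.Bn_ne_zero one_pos d.r_pos

end CanonicalDatum

theorem stmt4_general (p n : ℕ) (hn : 2 ≤ n) (d : CanonicalDatum p n) :
    (∀ j ∈ d.A ⟨0, d.r_pos⟩, ∀ a b : ZMod p,
        IsCanalizing p n d.eval j a b ↔ (a ∈ d.S j ∧ b = d.B 0)) ∧
    (∀ j : Fin n, j ∉ d.A ⟨0, d.r_pos⟩ → ∀ a b : ZMod p,
        ¬ IsCanalizing p n d.eval j a b) := by
  refine ⟨fun j hj a b => ⟨fun hcan => ?_, ?_⟩, fun j hj a b => ?_⟩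
  · have ha : a ∈ d.S j := by
      by_contra ha
      obtain ⟨x, y, hx, hy, hne⟩ := d.exists_eval_ne_on_slice hn fun _ => ha
      exact not_isCanalizing_of_ne hx hy hne hcan
    let x : Fin n → ZMod p := Function.update 0 j a
    have hx : x j = a := by simp [x]
    exact ⟨ha, (hcan.1 x hx).symm.trans (d.eval_eq_Bn_zero hj (hx ▸ ha))⟩
  · rintro ⟨ha, rfl⟩
    refine ⟨fun x hx => d.eval_eq_Bn_zero hj (hx ▸ ha), fun hall => ?_⟩
    obtain ⟨x, hxS, hxe⟩ := d.exists_eval_ne_B_zero hj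
    exact hxe (hall x fun h => hxS (h ▸ ha))
  · obtain ⟨x, y, hx, hy, hne⟩ := d.exists_eval_ne_on_slice hn fun h => absurd h hj
    exact not_isCanalizing_of_ne hx hy hne

/-- the canalizing variables of a function defined by a canonical datum are
exactly the variables in the first layer `A₁`; for `j ∈ A₁`, `f` is `⟨j:a:b⟩` canalizing
exactly when `a ∈ S_j` and `b = B₁`, and for `j ∉ A₁` no `a, b` work. -/
theorem stmt4 (p n : ℕ) [Fact (Nat.Prime p)] (hn : 2 ≤ n) (d : CanonicalDatum p n) :
    (∀ j ∈ d.A ⟨0, d.r_pos⟩, ∀ a b : ZMod p,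
        IsCanalizing p n d.eval j a b ↔ (a ∈ d.S j ∧ b = d.B 0)) ∧
    (∀ j : Fin n, j ∉ d.A ⟨0, d.r_pos⟩ → ∀ a b : ZMod p,
        ¬ IsCanalizing p n d.eval j a b) :=
  stmt4_general p n hn d
end

section
/- Let p be a prime, F = F_p, and n ≥ 2. The number of distinct functions f : F^n → F of the form f(x_1,…,x_n) = B_2·∏_{j=1}^{n} Q_{S_j}(x_j) + B_1, where B_1 ∈ F, B_2 ∈ F∖{0}, and S_1,…,S_n are segments of F (i.e., the number of nested canalizing functions in n variables whose layer number r equals 1), is 2^n (p−1)^{n+1} p. -/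
/-!
Such an `f` takes the value `B₁ + B₂` on the box `∏ⱼ (F ∖ Sⱼ)` and `B₁` off it. For `n ≥ 2` the
complements of two such boxes always meet (put one coordinate in some `Sᵢ` and another in some
`S'ⱼ`), so `f` determines `B₁`, then `B₂`, and then every `Sⱼ` (by moving a single coordinate of a
point of the box). Hence the functions are counted by their parameters: `p` choices of `B₁`,
`p - 1` of `B₂`, and `2 (p - 1)` segments `{0,…,j}` or `F ∖ {0,…,j}`, `j < p - 1`, per coordinate.
-/

open Finset

section Segments

variable {p : ℕ} {S : Finset (ZMod p)}

theorem not_isSegment_zero (S : Finset (ZMod 0)) : ¬ IsSegment 0 S :=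
  fun ⟨_, hj, _⟩ => Nat.not_lt_zero _ hj

theorem IsSegment.nonempty_s16 (hS : IsSegment p S) : S.Nonempty := by
  obtain ⟨j, hj, h | h⟩ := hS
  · exact ⟨0, by simp [h]⟩
  · exact ⟨((p - 1 : ℕ) : ZMod p), by rw [h, ZMod.val_cast_of_lt (by omega)]; omega⟩

theorem IsSegment.exists_notMem_s16 (hS : IsSegment p S) : ∃ c, c ∉ S := by
  obtain ⟨j, hj, h | h⟩ := hS
  · exact ⟨((p - 1 : ℕ) : ZMod p), by rw [h, ZMod.val_cast_of_lt (by omega)]; omega⟩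
  · exact ⟨0, by simp [h]⟩

variable [NeZero p]

def lowerSegment (p : ℕ) [NeZero p] (j : ℕ) : Finset (ZMod p) :=
  univ.filter fun x => x.val ≤ j

def segmentOf (p : ℕ) [NeZero p] (bj : Bool × Fin (p - 1)) : Finset (ZMod p) :=
  if bj.1 then lowerSegment p bj.2 else (lowerSegment p bj.2)ᶜ

theorem natCast_mem_lowerSegment {i j : ℕ} (hi : i < p) :
    (i : ZMod p) ∈ lowerSegment p j ↔ i ≤ j := by
  simp [lowerSegment, ZMod.val_cast_of_lt hi]

theorem lowerSegment_injOn : Set.InjOn (lowerSegment p) (Set.Iio p) := by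
  intro i hi j hj hij
  exact le_antisymm
    ((natCast_mem_lowerSegment hi).mp (hij ▸ (natCast_mem_lowerSegment hi).mpr le_rfl))
    ((natCast_mem_lowerSegment hj).mp (hij ▸ (natCast_mem_lowerSegment hj).mpr le_rfl))

theorem segmentOf_injective : Function.Injective (segmentOf p) := by
  rintro ⟨b, i⟩ ⟨b', j⟩ h
  have zero_mem : (0 : ZMod p) ∈ lowerSegment p i ∧ (0 : ZMod p) ∈ lowerSegment p j := by
    simp [lowerSegment]
  have hb : b = b' := by
    have h0 := Finset.ext_iff.mp h 0
    cases b <;> cases b' <;> simp [segmentOf, zero_mem.1, zero_mem.2] at h0 ⊢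
  subst hb
  have hlow : lowerSegment p i = lowerSegment p j := by
    cases b
    · exact compl_injective h
    · exact h
  have hp : p - 1 < p := Nat.sub_lt (NeZero.pos p) one_pos
  exact Prod.ext rfl (Fin.ext (lowerSegment_injOn (by simp; omega) (by simp; omega) hlow))

theorem setOf_isSegment : {S | IsSegment p S} = Set.range (segmentOf p) := by
  ext S
  constructor
  · rintro ⟨j, hj, h | h⟩
    · exact ⟨(true, ⟨j, hj⟩), by ext x; simp [segmentOf, lowerSegment, h]⟩
    · exact ⟨(false, ⟨j, hj⟩), by ext x; simp [segmentOf, lowerSegment, h]⟩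
  · rintro ⟨⟨b, j⟩, rfl⟩
    refine ⟨j, j.2, ?_⟩
    cases b
    · exact Or.inr fun x => by simp [segmentOf, lowerSegment]
    · exact Or.inl fun x => by simp [segmentOf, lowerSegment]

theorem ncard_setOf_isSegment : {S | IsSegment p S}.ncard = 2 * (p - 1) := by
  rw [setOf_isSegment, Set.ncard_range_of_injective segmentOf_injective]
  simp

end Segments

section ProductOfIndicators

variable {p : ℕ} {ι : Type*} [Fintype ι] {S S' : ι → Finset (ZMod p)} {x : ι → ZMod p}

theorem prod_Qind_eq_zero {i : ι} (hi : x i ∈ S i) : ∏ j, Qind p (S j) (x j) = 0 :=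
  Finset.prod_eq_zero (Finset.mem_univ i) (by simp [Qind, hi])

theorem prod_Qind_eq_one (hx : ∀ i, x i ∉ S i) : ∏ j, Qind p (S j) (x j) = 1 :=
  Finset.prod_eq_one fun i _ => by simp [Qind, hx i]

theorem const_eq_of_mul_prod_Qind_add_eq [Nontrivial ι] {B₁ B₂ B₁' B₂' : ZMod p}
    (hS : ∀ i, (S i).Nonempty) (hS' : ∀ i, (S' i).Nonempty)
    (hf : ∀ x : ι → ZMod p,
      B₂ * ∏ j, Qind p (S j) (x j) + B₁ = B₂' * ∏ j, Qind p (S' j) (x j) + B₁') :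
    B₁ = B₁' := by
  classical
  choose a ha using hS
  choose a' ha' using hS'
  obtain ⟨i, i', hii'⟩ := exists_pair_ne ι
  have h := hf (Function.update a i (a' i))
  rwa [prod_Qind_eq_zero (i := i') (by simpa [hii'.symm] using ha i'),
    prod_Qind_eq_zero (i := i) (by simpa using ha' i), mul_zero, mul_zero, zero_add,
    zero_add] at h

theorem subset_of_mul_prod_Qind_eq {B : ZMod p} (hB : B ≠ 0) (hS' : ∀ i, ∃ c, c ∉ S' i)
    (hf : ∀ x : ι → ZMod p, B * ∏ j, Qind p (S j) (x j) = B * ∏ j, Qind p (S' j) (x j))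
    (i : ι) :
    S i ⊆ S' i := by
  classical
  intro t ht
  by_contra ht'
  choose c hc using hS'
  have hout : ∀ j, Function.update c i t j ∉ S' j := by
    intro j
    rcases eq_or_ne j i with rfl | hj
    · simpa using ht'
    · simpa [hj] using hc j
  have h := hf (Function.update c i t)
  rw [prod_Qind_eq_zero (i := i) (by simpa using ht), prod_Qind_eq_one hout] at h
  exact hB (by simpa using h.symm)

theorem mul_prod_Qind_add_inj [Nontrivial ι] {B₁ B₂ B₁' B₂' : ZMod p}
    (hB₂ : B₂ ≠ 0) (hB₂' : B₂' ≠ 0)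
    (hS : ∀ i, IsSegment p (S i)) (hS' : ∀ i, IsSegment p (S' i))
    (hf : ∀ x : ι → ZMod p,
      B₂ * ∏ j, Qind p (S j) (x j) + B₁ = B₂' * ∏ j, Qind p (S' j) (x j) + B₁') :
    B₁ = B₁' ∧ B₂ = B₂' ∧ S = S' := by
  have hB₁ := const_eq_of_mul_prod_Qind_add_eq (fun i => (hS i).nonempty_s16)
    (fun i => (hS' i).nonempty_s16) hf
  subst hB₁
  have hB₂eq : B₂ = B₂' := by
    choose c hc using fun i => (hS' i).exists_notMem_s16
    have h := hf c
    rw [prod_Qind_eq_one hc, add_left_inj, mul_one] at h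
    by_cases hc' : ∃ i, c i ∈ S i
    · obtain ⟨i, hi⟩ := hc'
      exact absurd (by simpa [prod_Qind_eq_zero hi] using h.symm) hB₂'
    · simpa [prod_Qind_eq_one (not_exists.mp hc')] using h
  subst hB₂eq
  have hf' : ∀ x : ι → ZMod p,
      B₂ * ∏ j, Qind p (S j) (x j) = B₂ * ∏ j, Qind p (S' j) (x j) :=
    fun x => add_right_cancel (hf x)
  refine ⟨rfl, rfl, funext fun i => (subset_of_mul_prod_Qind_eq hB₂ ?_ hf' i).antisymm
    (subset_of_mul_prod_Qind_eq hB₂ ?_ (fun x => (hf' x).symm) i)⟩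
  · exact fun i => (hS' i).exists_notMem_s16
  · exact fun i => (hS i).exists_notMem_s16

def layerOneFun (P : ZMod p × {B : ZMod p // B ≠ 0} × (ι → {S | IsSegment p S})) :
    (ι → ZMod p) → ZMod p :=
  fun x => P.2.1 * ∏ j, Qind p (P.2.2 j) (x j) + P.1

theorem range_layerOneFun :
    Set.range layerOneFun = {f : (ι → ZMod p) → ZMod p |
      ∃ (B₁ B₂ : ZMod p) (S : ι → Finset (ZMod p)), B₂ ≠ 0 ∧ (∀ j, IsSegment p (S j)) ∧
        f = fun x => B₂ * ∏ j, Qind p (S j) (x j) + B₁} := by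
  ext f
  constructor
  · rintro ⟨⟨B₁, B₂, S⟩, rfl⟩
    exact ⟨B₁, B₂, fun j => S j, B₂.2, fun j => (S j).2, rfl⟩
  · rintro ⟨B₁, B₂, S, hB₂, hS, rfl⟩
    exact ⟨(B₁, ⟨B₂, hB₂⟩, fun j => ⟨S j, hS j⟩), rfl⟩

theorem layerOneFun_injective [Nontrivial ι] :
    Function.Injective (layerOneFun : _ → (ι → ZMod p) → ZMod p) := by
  rintro ⟨B₁, B₂, S⟩ ⟨B₁', B₂', S'⟩ h
  obtain ⟨rfl, hB₂, hS⟩ := mul_prod_Qind_add_inj B₂.2 B₂'.2 (fun j => (S j).2)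
    (fun j => (S' j).2) (congrFun h)
  exact Prod.ext rfl (Prod.ext (Subtype.ext hB₂) (funext fun j => Subtype.ext (congrFun hS j)))

end ProductOfIndicators

theorem stmt16_general (p n : ℕ) (hn : 2 ≤ n) :
    Set.ncard {f : (Fin n → ZMod p) → ZMod p |
      ∃ (B₁ B₂ : ZMod p) (S : Fin n → Finset (ZMod p)),
        B₂ ≠ 0 ∧ (∀ j, IsSegment p (S j)) ∧
        f = fun x => B₂ * ∏ j, Qind p (S j) (x j) + B₁} =
    2 ^ n * (p - 1) ^ (n + 1) * p := by
  have : Nontrivial (Fin n) := Fin.nontrivial_iff_two_le.mpr hn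
  rcases Nat.eq_zero_or_pos p with rfl | hp
  · simp [not_isSegment_zero]
  have : NeZero p := ⟨hp.ne'⟩
  have card_ne_zero : Nat.card {B : ZMod p // B ≠ 0} = p - 1 := by
    simp [Nat.card_eq_fintype_card, Fintype.card_subtype_compl]
  rw [← range_layerOneFun, Set.ncard_range_of_injective layerOneFun_injective, Nat.card_prod,
    Nat.card_prod, Nat.card_fun, Nat.card_coe_set_eq, ncard_setOf_isSegment, card_ne_zero,
    Nat.card_zmod, Nat.card_fin]
  ring

/-- the number of functions of the form
`f(x) = B₂·∏ⱼ Q_{Sⱼ}(xⱼ) + B₁` with `B₁ ∈ F`, `B₂ ≠ 0` and segments `S₁,…,Sₙ`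
(the NCFs in `n` variables with layer number `r = 1`) is `2^n (p−1)^{n+1} p`. -/
theorem stmt16 (p n : ℕ) [Fact (Nat.Prime p)] (hn : 2 ≤ n) :
    Set.ncard {f : (Fin n → ZMod p) → ZMod p |
      ∃ (B₁ B₂ : ZMod p) (S : Fin n → Finset (ZMod p)),
        B₂ ≠ 0 ∧ (∀ j, IsSegment p (S j)) ∧
        f = fun x => B₂ * ∏ j, Qind p (S j) (x j) + B₁} =
    2 ^ n * (p - 1) ^ (n + 1) * p :=
  stmt16_general p n hn
end
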